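/- For n ≥ 5, the flip graph D_n on ordered pairs of disjoint triangulations of a convex n-gon is connected, and its diameter is at most diam(T_n) + (2n − 8), where T_n is the flip graph of all triangulations of the n-gon; in particular, if diam(T_n) ≤ 2n−8, then diam(D_n) ≤ 4n−16. -/

import Mathlib

/-- A diagonal of the convex `n`-gon: an unordered pair of distinct,
non-adjacent vertices (vertices labeled by `Fin n` in cyclic order). -/
def IsDiag (n : ℕ) (d : Sym2 (Fin n)) : Prop :=
  ∃ a b : Fin n, d = s(a, b) ∧ a ≠ b ∧
    (a.val + 1) % n ≠ b.val ∧ (b.val + 1) % n ≠ a.val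

/-- Two diagonals of the convex `n`-gon cross (their endpoints strictly
interleave around the polygon). -/
def Crosses (n : ℕ) (d e : Sym2 (Fin n)) : Prop :=
  (∃ a b c c' : Fin n, d = s(a, b) ∧ e = s(c, c') ∧ a < c ∧ c < b ∧ b < c') ∨
  (∃ a b c c' : Fin n, e = s(a, b) ∧ d = s(c, c') ∧ a < c ∧ c < b ∧ b < c')

/-- A triangulation of the convex `n`-gon: a maximal set of pairwise
noncrossing diagonals. -/
structure Triangulation (n : ℕ) where
  diags : Finset (Sym2 (Fin n))
  isDiag : ∀ d ∈ diags, IsDiag n d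
  noncross : ∀ d ∈ diags, ∀ e ∈ diags, ¬ Crosses n d e
  maximal : ∀ d, IsDiag n d → (∀ e ∈ diags, ¬ Crosses n d e) → d ∈ diags

/-- `IsFlip T d T'` : the triangulation `T'` is obtained from `T` by flipping
the diagonal `d` (removing `d`, keeping all other diagonals, and inserting the
opposite diagonal of the resulting quadrilateral). -/
def IsFlip {n : ℕ} (T : Triangulation n) (d : Sym2 (Fin n)) (T' : Triangulation n) : Prop :=
  d ∈ T.diags ∧ d ∉ T'.diags ∧ ∀ e ∈ T.diags, e ≠ d → e ∈ T'.diags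

/-- Two triangulations are related by a single diagonal flip. -/
def FlipAdj {n : ℕ} (T T' : Triangulation n) : Prop := ∃ d, IsFlip T d T'

/-- `d'` is the new diagonal created when passing from `T` to `T'`. -/
def NewDiag {n : ℕ} (T T' : Triangulation n) (d' : Sym2 (Fin n)) : Prop :=
  d' ∈ T'.diags ∧ d' ∉ T.diags

/-- Flip of a pair of triangulations at a diagonal of the first coordinate:
flip it there, and if the new diagonal lies in the second triangulation,
flip it there as well. -/
def PairFlipFst {n : ℕ} (p q : Triangulation n × Triangulation n) : Prop :=
  ∃ d T₁' d', IsFlip p.1 d T₁' ∧ NewDiag p.1 T₁' d' ∧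
    ((d' ∉ p.2.diags ∧ q = (T₁', p.2)) ∨
     (d' ∈ p.2.diags ∧ ∃ T₂', IsFlip p.2 d' T₂' ∧ q = (T₁', T₂')))

/-- Flip of a pair of triangulations at a diagonal of the second coordinate. -/
def PairFlipSnd {n : ℕ} (p q : Triangulation n × Triangulation n) : Prop :=
  ∃ d T₂' d', IsFlip p.2 d T₂' ∧ NewDiag p.2 T₂' d' ∧
    ((d' ∉ p.1.diags ∧ q = (p.1, T₂')) ∨
     (d' ∈ p.1.diags ∧ ∃ T₁', IsFlip p.1 d' T₁' ∧ q = (T₁', T₂')))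

/-- The flip operation on ordered pairs of triangulations. -/
def PairFlip {n : ℕ} (p q : Triangulation n × Triangulation n) : Prop :=
  PairFlipFst p q ∨ PairFlipSnd p q

/-- Vertices of the flip graph `D_n`: ordered pairs of triangulations of the
convex `n`-gon sharing no diagonal. -/
def DVert (n : ℕ) := {p : Triangulation n × Triangulation n // Disjoint p.1.diags p.2.diags}

/-- The flip graph `D_n` on ordered pairs of disjoint triangulations. -/
def DGraph (n : ℕ) : SimpleGraph (DVert n) where
  Adj p q := p ≠ q ∧ (PairFlip p.1 q.1 ∨ PairFlip q.1 p.1)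
  symm := ⟨fun _ _ h => ⟨h.1.symm, h.2.symm⟩⟩
  loopless := ⟨fun _ h => h.1 rfl⟩

/-- The flip graph `T_n` on all triangulations of the convex `n`-gon. -/
def TriGraph (n : ℕ) : SimpleGraph (Triangulation n) where
  Adj T T' := T ≠ T' ∧ (FlipAdj T T' ∨ FlipAdj T' T)
  symm := ⟨fun _ _ h => ⟨h.1.symm, h.2.symm⟩⟩
  loopless := ⟨fun _ h => h.1 rfl⟩

/-- Vertices of `T_n(S)`: triangulations disjoint from `S`. -/
def TnSVert (n : ℕ) (S : Triangulation n) := {T : Triangulation n // Disjoint T.diags S.diags}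

/-- The flip graph `T_n(S)` induced on triangulations disjoint from `S`. -/
def TnS (n : ℕ) (S : Triangulation n) : SimpleGraph (TnSVert n S) where
  Adj T T' := T ≠ T' ∧ (FlipAdj T.1 T'.1 ∨ FlipAdj T'.1 T.1)
  symm := ⟨fun _ _ h => ⟨h.1.symm, h.2.symm⟩⟩
  loopless := ⟨fun _ h => h.1 rfl⟩

/-!
Flipping a diagonal in the first triangulation of a pair, and then, if necessary, the new diagonal
in the second one, keeps the pair disjoint; so every path of `T_n` from `T₁` to `S₁` lifts to a path
of `D_n` of the same length from `(T₁, T₂)` to some `(S₁, X)`. A shortest diagonal of `S₁` cuts off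
an ear whose middle vertex `v` lies on no diagonal of `S₁`. Every triangulation disjoint from `S₁`
then has a diagonal through `v`, and flips raising the degree of `v` (available until the fan at `v`
is reached) create diagonals through `v`, hence outside `S₁`. So `(S₁, X)` and `(S₁, S₂)` both reach
`(S₁, fan v)` within `(n - 3) - 1` flips of the second coordinate.

That every diagonal of a triangulation has a unique flip partner is proved for diagonals through
vertex `0`, from the two triangles on either side, and transported by rotating the polygon.
-/

theorem SimpleGraph.exists_walk_length_le_of_ascent {V : Type*} {G : SimpleGraph V}
    (P : V → Prop) (f : V → ℕ) {M : ℕ} {t : V} (hM : ∀ x, P x → f x ≤ M)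
    (hstep : ∀ x, P x → x ≠ t → ∃ y, P y ∧ G.Adj x y ∧ f x < f y) (x : V) (hx : P x) :
    ∃ p : G.Walk x t, p.length ≤ M - f x := by
  obtain ⟨k, hk⟩ : ∃ k, M - f x = k := ⟨_, rfl⟩
  induction k using Nat.strong_induction_on generalizing x with
  | _ k ih =>
    by_cases hxt : x = t
    · subst hxt
      exact ⟨.nil, Nat.zero_le _⟩
    obtain ⟨y, hy, hxy, hfy⟩ := hstep x hx hxt
    have := hM y hy
    obtain ⟨p, hp⟩ := ih (M - f y) (by omega) y hy rfl
    exact ⟨.cons hxy p, by rw [SimpleGraph.Walk.length_cons]; omega⟩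

theorem SimpleGraph.diam_le_of_forall_exists_walk {V : Type*} {G : SimpleGraph V} {k : ℕ}
    (h : ∀ u v, ∃ p : G.Walk u v, p.length ≤ k) : G.diam ≤ k :=
  ENat.toNat_le_of_le_natCast <| SimpleGraph.ediam_le_of_edist_le fun u v =>
    let ⟨p, hp⟩ := h u v
    p.edist_le.trans (by exact_mod_cast hp)

variable {n : ℕ}

theorem isDiag_mk_iff {a b : Fin n} :
    IsDiag n s(a, b) ↔ a ≠ b ∧ (a.val + 1) % n ≠ b.val ∧ (b.val + 1) % n ≠ a.val := by
  constructor
  · rintro ⟨x, y, hxy, hne, hx, hy⟩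
    rcases Sym2.eq_iff.1 hxy with ⟨rfl, rfl⟩ | ⟨rfl, rfl⟩
    · exact ⟨hne, hx, hy⟩
    · exact ⟨hne.symm, hy, hx⟩
  · rintro ⟨hne, ha, hb⟩
    exact ⟨a, b, rfl, hne, ha, hb⟩

theorem isDiag_mk_iff_of_lt {a b : Fin n} (hab : a < b) :
    IsDiag n s(a, b) ↔ a.val + 1 < b.val ∧ (a.val = 0 → b.val + 1 < n) := by
  have hb := b.isLt
  rw [isDiag_mk_iff, Nat.mod_eq_of_lt (show a.val + 1 < n by omega)]
  rcases (show b.val + 1 ≤ n from hb).eq_or_lt with h | h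
  · rw [h, Nat.mod_self]
    omega
  · rw [Nat.mod_eq_of_lt h]
    omega

theorem IsDiag.exists_lt {d : Sym2 (Fin n)} (hd : IsDiag n d) : ∃ a b, a < b ∧ d = s(a, b) := by
  obtain ⟨a, b, rfl, hab, -⟩ := hd
  rcases hab.lt_or_gt with h | h
  · exact ⟨a, b, h, rfl⟩
  · exact ⟨b, a, h, Sym2.eq_swap⟩

theorem crosses_mk_iff_of_lt {a b c d : Fin n} (hab : a < b) (hcd : c < d) :
    Crosses n s(a, b) s(c, d) ↔ a < c ∧ c < b ∧ b < d ∨ c < a ∧ a < d ∧ d < b := by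
  constructor
  · rintro (⟨x, y, z, w, h₁, h₂, hxz, hzy, hyw⟩ | ⟨x, y, z, w, h₁, h₂, hxz, hzy, hyw⟩) <;>
    · rcases Sym2.eq_iff.1 h₁ with ⟨rfl, rfl⟩ | ⟨rfl, rfl⟩ <;>
      rcases Sym2.eq_iff.1 h₂ with ⟨rfl, rfl⟩ | ⟨rfl, rfl⟩ <;> omega
  · rintro (⟨h₁, h₂, h₃⟩ | ⟨h₁, h₂, h₃⟩)
    · exact Or.inl ⟨a, b, c, d, rfl, rfl, h₁, h₂, h₃⟩
    · exact Or.inr ⟨c, d, a, b, rfl, rfl, h₁, h₂, h₃⟩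

theorem Crosses.mk_of_lt {a b c d : Fin n} (h₁ : a < c) (h₂ : c < b) (h₃ : b < d) :
    Crosses n s(a, b) s(c, d) :=
  Or.inl ⟨a, b, c, d, rfl, rfl, h₁, h₂, h₃⟩

theorem Crosses.symm {d e : Sym2 (Fin n)} (h : Crosses n d e) : Crosses n e d :=
  h.elim Or.inr Or.inl

theorem Crosses.isDiag {d e : Sym2 (Fin n)} (h : Crosses n d e) : IsDiag n d ∧ IsDiag n e := by
  have key : ∀ a b c c' : Fin n, a < c → c < b → b < c' → IsDiag n s(a, b) ∧ IsDiag n s(c, c') :=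
    fun a b c c' h₁ h₂ h₃ => by
      have := c'.isLt
      exact ⟨(isDiag_mk_iff_of_lt (h₁.trans h₂)).2 (by omega),
        (isDiag_mk_iff_of_lt (h₂.trans h₃)).2 (by omega)⟩
  rcases h with ⟨a, b, c, c', rfl, rfl, h⟩ | ⟨a, b, c, c', rfl, rfl, h⟩
  · exact key a b c c' h.1 h.2.1 h.2.2
  · exact (key a b c c' h.1 h.2.1 h.2.2).symm

theorem not_crosses_of_mem {d e : Sym2 (Fin n)} {v : Fin n} (hd : v ∈ d) (he : v ∈ e) :
    ¬ Crosses n d e := by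
  rintro (⟨a, b, c, c', rfl, rfl, h⟩ | ⟨a, b, c, c', rfl, rfl, h⟩) <;>
  · simp only [Sym2.mem_iff] at hd he
    omega

theorem not_crosses_self (d : Sym2 (Fin n)) : ¬ Crosses n d d := by
  induction d using Sym2.ind with
  | _ a b => exact not_crosses_of_mem (Sym2.mem_mk_left a b) (Sym2.mem_mk_left a b)

/-- `a p b q` is a convex quadrilateral with diagonals `ab` and `pq`. -/
theorem eq_of_crosses_diagonal_of_not_crosses_sides {a p b q u w : Fin n} (hap : a < p)
    (hpb : p < b) (hbq : b < q) (huw : u < w) (h₁ : ¬ Crosses n s(u, w) s(a, p))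
    (h₂ : ¬ Crosses n s(u, w) s(p, b)) (h₃ : ¬ Crosses n s(u, w) s(b, q))
    (h₄ : ¬ Crosses n s(u, w) s(a, q)) :
    (Crosses n s(u, w) s(p, q) → s(u, w) = s(a, b)) ∧
      (Crosses n s(u, w) s(a, b) → s(u, w) = s(p, q)) := by
  rw [crosses_mk_iff_of_lt huw hap] at h₁
  rw [crosses_mk_iff_of_lt huw hpb] at h₂
  rw [crosses_mk_iff_of_lt huw hbq] at h₃
  rw [crosses_mk_iff_of_lt huw ((hap.trans hpb).trans hbq)] at h₄
  rw [crosses_mk_iff_of_lt huw (hpb.trans hbq), crosses_mk_iff_of_lt huw (hap.trans hpb),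
    Sym2.eq_iff, Sym2.eq_iff]
  omega

theorem exists_crosses_of_not_mem {v : Fin n} {g : Sym2 (Fin n)} (hg : IsDiag n g) (hv : v ∉ g) :
    ∃ w, Crosses n s(v, w) g := by
  obtain ⟨a, b, hab, rfl⟩ := hg.exists_lt
  have hd := (isDiag_mk_iff_of_lt hab).1 hg
  have hva : v ≠ a := fun h => hv (h ▸ Sym2.mem_mk_left a b)
  have hvb : v ≠ b := fun h => hv (h ▸ Sym2.mem_mk_right a b)
  have swap : ∀ {x y : Fin n}, Crosses n s(x, y) s(a, b) → Crosses n s(y, x) s(a, b) :=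
    fun h => Sym2.eq_swap ▸ h
  obtain ⟨a₁, ha₁⟩ : ∃ w : Fin n, w.val = a.val + 1 := ⟨⟨a.val + 1, by omega⟩, rfl⟩
  rcases lt_or_gt_of_ne hva with hva | hav
  · exact ⟨a₁, Crosses.mk_of_lt hva (by omega) (by omega)⟩
  rcases lt_or_gt_of_ne hvb with hvb | hbv
  · rcases Nat.eq_zero_or_pos a.val with ha | ha
    · obtain ⟨b₁, hb₁⟩ : ∃ w : Fin n, w.val = b.val + 1 := ⟨⟨b.val + 1, by omega⟩, rfl⟩
      exact ⟨b₁, (Crosses.mk_of_lt hav hvb (by omega)).symm⟩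
    · obtain ⟨a₀, ha₀⟩ : ∃ w : Fin n, w.val + 1 = a.val := ⟨⟨a.val - 1, by omega⟩, by simp; omega⟩
      exact ⟨a₀, swap (Crosses.mk_of_lt (by omega) hav hvb)⟩
  · exact ⟨a₁, swap (Crosses.mk_of_lt (by omega) (by omega) hbv).symm⟩

namespace Triangulation

variable {T T' : Triangulation n} {d f : Sym2 (Fin n)} {v : Fin n}

theorem ext (h : T.diags = T'.diags) : T = T' := by
  cases T; cases T'; simpa using h

theorem eq_of_subset (h : T.diags ⊆ T'.diags) : T = T' :=
  ext <| h.antisymm fun e he =>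
    T.maximal e (T'.isDiag e he) fun e' he' => T'.noncross e he e' (h he')

theorem mem_diags_of_forall {g : Sym2 (Fin n)} (hg : IsDiag n g)
    (h : ∀ u w, u < w → s(u, w) ∈ T.diags → ¬ Crosses n g s(u, w)) : g ∈ T.diags := by
  refine T.maximal g hg fun e he => ?_
  obtain ⟨u, w, huw, rfl⟩ := (T.isDiag e he).exists_lt
  exact h u w huw he

variable (T) in
/-- Sides of the polygon count as edges of every triangulation. -/
def IsEdge (a b : Fin n) : Prop := IsDiag n s(a, b) → s(a, b) ∈ T.diags

theorem isEdge_of_mem {a b : Fin n} (h : s(a, b) ∈ T.diags) : T.IsEdge a b := fun _ => h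

theorem isEdge_of_val_add_one {a b : Fin n} (h : a.val + 1 = b.val) : T.IsEdge a b := fun hd =>
  ((isDiag_mk_iff.1 hd).2.1 (by rw [h, Nat.mod_eq_of_lt b.isLt])).elim

theorem isEdge_of_val_eq_zero {a b : Fin n} (ha : a.val = 0) (hb : b.val + 1 = n) :
    T.IsEdge a b :=
  fun hd => ((isDiag_mk_iff.1 hd).2.2 (by rw [hb, Nat.mod_self, ha])).elim

theorem IsEdge.not_crosses {a b : Fin n} {e : Sym2 (Fin n)} (h : T.IsEdge a b)
    (he : e ∈ T.diags) : ¬ Crosses n e s(a, b) :=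
  fun hc => T.noncross e he _ (h hc.isDiag.2) hc

/-- The apex `p` of the triangle of `T` on the inner side of the edge `ab` is the largest `p < b`
joined to `a`. -/
theorem exists_apex {a b : Fin n} (hab : a.val + 1 < b.val) (h : T.IsEdge a b) :
    ∃ p, a < p ∧ p < b ∧ T.IsEdge a p ∧ T.IsEdge p b := by
  classical
  obtain ⟨p, hp, hmax⟩ := Finset.exists_max_image
    (Finset.univ.filter fun x => a < x ∧ x < b ∧ T.IsEdge a x) id
    ⟨⟨a.val + 1, by omega⟩, Finset.mem_filter.2
      ⟨Finset.mem_univ _, Fin.lt_def.2 (by simp), Fin.lt_def.2 hab, isEdge_of_val_add_one rfl⟩⟩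
  simp only [Finset.mem_filter, Finset.mem_univ, true_and, id] at hp hmax
  obtain ⟨hap, hpb, hp⟩ := hp
  refine ⟨p, hap, hpb, hp, fun hd => mem_diags_of_forall hd fun u w huw he hc => ?_⟩
  rw [crosses_mk_iff_of_lt hpb huw] at hc
  rcases lt_trichotomy u a with hua | rfl | hau
  · exact h.not_crosses he ((crosses_mk_iff_of_lt huw (hap.trans hpb)).2 (by omega))
  · exact (hmax w ⟨by omega, by omega, isEdge_of_mem he⟩).not_gt (by omega)
  · rcases hc with hc | hc
    · exact h.not_crosses he ((crosses_mk_iff_of_lt huw (hap.trans hpb)).2 (by omega))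
    · exact hp.not_crosses he ((crosses_mk_iff_of_lt huw hap).2 (by omega))

variable (T) in
def IsFlipPartner (d f : Sym2 (Fin n)) : Prop :=
  IsDiag n f ∧ f ∉ T.diags ∧ ∀ e ∈ T.diags, e ≠ d → ¬ Crosses n f e

theorem IsFlipPartner.crosses (hf : T.IsFlipPartner d f) : Crosses n f d := by
  by_contra h
  exact hf.2.1 (T.maximal f hf.1 fun e he => if hed : e = d then hed ▸ h else hf.2.2 e he hed)

theorem IsFlipPartner.mem (hf : T.IsFlipPartner d f) : d ∈ T.diags := by
  by_contra hd
  exact hf.2.1 (T.maximal f hf.1 fun e he => hf.2.2 e he (ne_of_mem_of_not_mem he hd))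

theorem IsFlipPartner.not_crosses_of_isEdge {a b : Fin n} (hf : T.IsFlipPartner d f)
    (h : T.IsEdge a b) (hne : s(a, b) ≠ d) : ¬ Crosses n f s(a, b) :=
  fun hc => hf.2.2 _ (h hc.isDiag.2) hne hc

open scoped Classical in
noncomputable def fan (v : Fin n) : Triangulation n where
  diags := (Finset.univ.filter fun w => IsDiag n s(v, w)).image fun w => s(v, w)
  isDiag e he := by
    obtain ⟨w, hw, rfl⟩ := Finset.mem_image.1 he
    exact (Finset.mem_filter.1 hw).2
  noncross e he e' he' := by
    obtain ⟨w, -, rfl⟩ := Finset.mem_image.1 he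
    obtain ⟨w', -, rfl⟩ := Finset.mem_image.1 he'
    exact not_crosses_of_mem (Sym2.mem_mk_left v w) (Sym2.mem_mk_left v w')
  maximal g hg h := by
    by_cases hv : v ∈ g
    · obtain ⟨w, rfl⟩ := Sym2.mem_iff_exists.1 hv
      exact Finset.mem_image_of_mem _ (Finset.mem_filter.2 ⟨Finset.mem_univ w, hg⟩)
    · obtain ⟨w, hw⟩ := exists_crosses_of_not_mem hg hv
      exact absurd hw.symm (h _ (Finset.mem_image_of_mem _
        (Finset.mem_filter.2 ⟨Finset.mem_univ w, hw.isDiag.1⟩)))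

theorem mem_fan {e : Sym2 (Fin n)} : e ∈ (fan v).diags ↔ IsDiag n e ∧ v ∈ e := by
  classical
  refine ⟨fun he => ⟨(fan v).isDiag e he, ?_⟩, fun ⟨he, hv⟩ => ?_⟩
  · obtain ⟨w, -, rfl⟩ := Finset.mem_image.1 he
    exact Sym2.mem_mk_left v w
  · obtain ⟨w, rfl⟩ := Sym2.mem_iff_exists.1 hv
    exact Finset.mem_image_of_mem _ (Finset.mem_filter.2 ⟨Finset.mem_univ w, he⟩)

theorem disjoint_fan (hv : ∀ e ∈ T.diags, v ∉ e) : Disjoint T.diags (fan v).diags :=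
  Finset.disjoint_left.2 fun _ he he' => hv _ he (mem_fan.1 he').2

theorem mem_of_forall_not_mem {a b c : Fin n} (hab : a.val + 1 = b.val) (hbc : b.val + 1 = c.val)
    (hd : IsDiag n s(a, c)) (hb : ∀ e ∈ T.diags, b ∉ e) : s(a, c) ∈ T.diags :=
  mem_diags_of_forall hd fun u w huw he hc => by
    rw [crosses_mk_iff_of_lt (Fin.lt_def.2 (by omega)) huw] at hc
    exact hb _ he (Sym2.mem_iff.2 (by omega))

variable (T) in
def degree (v : Fin n) : ℕ := (T.diags.filter (v ∈ ·)).card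

/-- A shortest diagonal `ac` of `S` cuts off an ear `abc`: no diagonal of `S` meets `b`, and every
triangulation avoiding `b` contains `ac`. -/
theorem exists_forall_not_mem_and_degree_pos (hn : 4 ≤ n) (S : Triangulation n) :
    ∃ v, (∀ e ∈ S.diags, v ∉ e) ∧
      ∀ X : Triangulation n, Disjoint S.diags X.diags → 0 < X.degree v := by
  classical
  obtain ⟨e₀, he₀⟩ : S.diags.Nonempty := by
    refine Finset.nonempty_iff_ne_empty.2 fun h => ?_
    have hd : IsDiag n s(⟨0, by omega⟩, ⟨2, by omega⟩) :=
      (isDiag_mk_iff_of_lt (Fin.lt_def.2 (by simp))).2 ⟨by simp, fun _ => by simp; omega⟩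
    simpa [h] using S.maximal _ hd (by simp [h])
  obtain ⟨u₀, w₀, huw₀, rfl⟩ := (S.isDiag e₀ he₀).exists_lt
  obtain ⟨⟨a, c⟩, hac, hmin⟩ := Finset.exists_min_image
    (Finset.univ.filter fun p : Fin n × Fin n => p.1 < p.2 ∧ s(p.1, p.2) ∈ S.diags)
    (fun p => p.2.val - p.1.val) ⟨(u₀, w₀), by simpa using ⟨huw₀, he₀⟩⟩
  simp only [Finset.mem_filter, Finset.mem_univ, true_and, Prod.forall] at hac hmin
  obtain ⟨hac, hacS⟩ := hac
  have hd := (isDiag_mk_iff_of_lt hac).1 (S.isDiag _ hacS)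
  obtain ⟨b, hb⟩ : ∃ b : Fin n, b.val = a.val + 1 := ⟨⟨a.val + 1, by omega⟩, rfl⟩
  obtain ⟨c', hc'⟩ : ∃ c' : Fin n, c'.val = a.val + 2 := ⟨⟨a.val + 2, by omega⟩, rfl⟩
  have hbS : ∀ e ∈ S.diags, b ∉ e := fun e he hbe => by
    obtain ⟨u, w, huw, rfl⟩ := (S.isDiag e he).exists_lt
    have hd' := (isDiag_mk_iff_of_lt huw).1 (S.isDiag _ he)
    have hspan := hmin u w ⟨huw, he⟩
    have hnc := S.noncross _ he _ hacS
    rw [crosses_mk_iff_of_lt huw hac] at hnc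
    rw [Sym2.mem_iff] at hbe
    omega
  have hd' : IsDiag n s(a, c') :=
    (isDiag_mk_iff_of_lt (Fin.lt_def.2 (by omega))).2 ⟨by omega, by omega⟩
  refine ⟨b, hbS, fun X hX => Finset.card_pos.2 ?_⟩
  by_contra hXb
  have hXb' : ∀ e ∈ X.diags, b ∉ e := fun e he hbe => hXb ⟨e, Finset.mem_filter.2 ⟨he, hbe⟩⟩
  exact Finset.disjoint_left.1 hX (mem_of_forall_not_mem hb.symm (by omega) hd' hbS)
    (mem_of_forall_not_mem hb.symm (by omega) hd' hXb')

end Triangulation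

section

variable [NeZero n]

theorem isDiag_mk_iff_add_one {a b : Fin n} :
    IsDiag n s(a, b) ↔ a ≠ b ∧ a + 1 ≠ b ∧ b + 1 ≠ a := by
  have key : ∀ x y : Fin n, (x.val + 1) % n = y.val ↔ x + 1 = y := fun x y => by
    simp [Fin.ext_iff, Fin.val_add]
  simp only [isDiag_mk_iff, Ne, key]

theorem isDiag_zero_mk_iff {b : Fin n} : IsDiag n s(0, b) ↔ 1 < b.val ∧ b.val + 1 < n := by
  rcases (Fin.zero_le b).eq_or_lt with rfl | hb
  · simp [isDiag_mk_iff]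
  · rw [isDiag_mk_iff_of_lt hb, Fin.val_zero]
    omega

def segmentRotation (k : Fin n) : Sym2 (Fin n) ≃ Sym2 (Fin n) where
  toFun := Sym2.map (· + k)
  invFun := Sym2.map (· + -k)
  left_inv d := by simp [Sym2.map_map]
  right_inv d := by simp [Sym2.map_map]

@[simp]
theorem segmentRotation_mk (k a b : Fin n) : segmentRotation k s(a, b) = s(a + k, b + k) := rfl

theorem segmentRotation_symm_apply (k : Fin n) (d : Sym2 (Fin n)) :
    (segmentRotation k).symm d = segmentRotation (-k) d :=
  rfl

theorem mem_segmentRotation_iff {k v : Fin n} {d : Sym2 (Fin n)} :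
    v + k ∈ segmentRotation k d ↔ v ∈ d := by
  induction d using Sym2.ind with
  | _ a b => simp

theorem isDiag_segmentRotation_iff (k : Fin n) {d : Sym2 (Fin n)} :
    IsDiag n (segmentRotation k d) ↔ IsDiag n d := by
  induction d using Sym2.ind with
  | _ a b =>
    simp only [segmentRotation_mk, isDiag_mk_iff_add_one, Ne, add_right_comm _ k 1, add_left_inj]

theorem Crosses.segmentRotation (k : Fin n) {d e : Sym2 (Fin n)} (h : Crosses n d e) :
    Crosses n (segmentRotation k d) (segmentRotation k e) := by
  have swap : ∀ {x y : Fin n} {f : Sym2 (Fin n)}, Crosses n s(x, y) f → Crosses n s(y, x) f :=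
    fun h => Sym2.eq_swap ▸ h
  -- the vertices that the rotation carries past `n - 1` form a final segment of `a < c < b < c'`
  have key : ∀ a b c c' : Fin n, a < c → c < b → b < c' →
      Crosses n s(a + k, b + k) s(c + k, c' + k) := by
    intro a b c c' h₁ h₂ h₃
    have ha := Fin.val_add_eq_ite a k
    have hb := Fin.val_add_eq_ite b k
    have hc := Fin.val_add_eq_ite c k
    have hc' := Fin.val_add_eq_ite c' k
    split_ifs at ha hb hc hc' <;>
    first
    | exact Crosses.mk_of_lt (by omega) (by omega) (by omega)
    | exact swap (Crosses.mk_of_lt (by omega) (by omega) (by omega)).symm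
    | exact swap (swap (Crosses.mk_of_lt (by omega) (by omega) (by omega)).symm).symm
    | exact (swap (Crosses.mk_of_lt (by omega) (by omega) (by omega))).symm
  rcases h with ⟨a, b, c, c', rfl, rfl, h⟩ | ⟨a, b, c, c', rfl, rfl, h⟩
  · exact key a b c c' h.1 h.2.1 h.2.2
  · exact (key a b c c' h.1 h.2.1 h.2.2).symm

theorem crosses_segmentRotation_iff (k : Fin n) {d e : Sym2 (Fin n)} :
    Crosses n (segmentRotation k d) (segmentRotation k e) ↔ Crosses n d e := by
  refine ⟨fun h => ?_, Crosses.segmentRotation k⟩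
  simpa [← segmentRotation_symm_apply] using h.segmentRotation (-k)

namespace Triangulation

variable {T T' : Triangulation n} {d f : Sym2 (Fin n)} {v : Fin n}

def rotate (T : Triangulation n) (k : Fin n) : Triangulation n where
  diags := T.diags.map (segmentRotation k).toEmbedding
  isDiag e he := by
    obtain ⟨d, hd, rfl⟩ := Finset.mem_map.1 he
    exact (isDiag_segmentRotation_iff k).2 (T.isDiag d hd)
  noncross e he f hf := by
    obtain ⟨d, hd, rfl⟩ := Finset.mem_map.1 he
    obtain ⟨d', hd', rfl⟩ := Finset.mem_map.1 hf
    rw [Equiv.coe_toEmbedding, crosses_segmentRotation_iff]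
    exact T.noncross d hd d' hd'
  maximal g hg h := by
    rw [Finset.mem_map_equiv]
    refine T.maximal _ ?_ fun e he hc => h _ (Finset.mem_map_of_mem _ he) ?_
    · rwa [← isDiag_segmentRotation_iff k, Equiv.apply_symm_apply]
    · rwa [← crosses_segmentRotation_iff k, Equiv.apply_symm_apply] at hc

theorem rotate_diags (T : Triangulation n) (k : Fin n) :
    (T.rotate k).diags = T.diags.map (segmentRotation k).toEmbedding :=
  rfl

theorem segmentRotation_mem_rotate {k : Fin n} :
    segmentRotation k d ∈ (T.rotate k).diags ↔ d ∈ T.diags :=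
  Finset.mem_map' _

theorem isFlipPartner_rotate_iff {k : Fin n} :
    (T.rotate k).IsFlipPartner (segmentRotation k d) (segmentRotation k f) ↔
      T.IsFlipPartner d f := by
  rw [IsFlipPartner, IsFlipPartner, isDiag_segmentRotation_iff, segmentRotation_mem_rotate]
  simp only [rotate_diags, Finset.forall_mem_map, Equiv.coe_toEmbedding,
    (segmentRotation k).injective.ne_iff, crosses_segmentRotation_iff]

/-- The apex `q` of the triangle of `T` on the outer side of the diagonal `0b` is the largest `q`
joined to `b`. -/
theorem exists_apex_of_zero_mem {b : Fin n} (hb : s(0, b) ∈ T.diags) :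
    ∃ q, b < q ∧ T.IsEdge b q ∧ T.IsEdge 0 q := by
  classical
  have h0 := Fin.val_zero n
  obtain ⟨h1b, hbn⟩ := isDiag_zero_mk_iff.1 (T.isDiag _ hb)
  have h0b : (0 : Fin n) < b := Fin.lt_def.2 (by omega)
  obtain ⟨q, hq, hmax⟩ := Finset.exists_max_image
    (Finset.univ.filter fun y => b < y ∧ T.IsEdge b y) id
    ⟨⟨b.val + 1, hbn⟩, Finset.mem_filter.2
      ⟨Finset.mem_univ _, Fin.lt_def.2 (by simp), isEdge_of_val_add_one rfl⟩⟩
  simp only [Finset.mem_filter, Finset.mem_univ, true_and, id] at hq hmax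
  obtain ⟨hbq, hq⟩ := hq
  refine ⟨q, hbq, hq, fun hd => mem_diags_of_forall hd fun u w huw he hc => ?_⟩
  rw [crosses_mk_iff_of_lt (h0b.trans hbq) huw] at hc
  rcases lt_trichotomy u b with hub | rfl | hbu
  · exact (isEdge_of_mem hb).not_crosses he ((crosses_mk_iff_of_lt huw h0b).2 (by omega))
  · exact (hmax w ⟨by omega, isEdge_of_mem he⟩).not_gt (by omega)
  · exact hq.not_crosses he ((crosses_mk_iff_of_lt huw hbq).2 (by omega))

/-- The flip partner of `0b` is the other diagonal `pq` of the quadrilateral `0pbq` formed by the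
two triangles of `T` on either side of `0b`. -/
theorem existsUnique_isFlipPartner_of_zero_mem {b : Fin n} (hb : s(0, b) ∈ T.diags) :
    ∃! f, T.IsFlipPartner s(0, b) f := by
  have h0 := Fin.val_zero n
  have hb' := isDiag_zero_mk_iff.1 (T.isDiag _ hb)
  obtain ⟨p, h0p, hpb, h0p', hpb'⟩ := T.exists_apex (by omega) (isEdge_of_mem hb)
  obtain ⟨q, hbq, hbq', h0q'⟩ := T.exists_apex_of_zero_mem hb
  have hpq : IsDiag n s(p, q) := (isDiag_mk_iff_of_lt (hpb.trans hbq)).2 ⟨by omega, by omega⟩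
  refine ⟨s(p, q), ⟨hpq, fun h => T.noncross _ hb _ h (Crosses.mk_of_lt h0p hpb hbq), ?_⟩, ?_⟩
  · intro e he hne hc
    obtain ⟨u, w, huw, rfl⟩ := (T.isDiag e he).exists_lt
    exact hne ((eq_of_crosses_diagonal_of_not_crosses_sides h0p hpb hbq huw
      (h0p'.not_crosses he) (hpb'.not_crosses he) (hbq'.not_crosses he)
      (h0q'.not_crosses he)).1 hc.symm)
  · intro f hf
    obtain ⟨u, w, huw, rfl⟩ := hf.1.exists_lt
    have side : ∀ {x y : Fin n}, T.IsEdge x y → s(x, y) ≠ s(0, b) → ¬ Crosses n s(u, w) s(x, y) :=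
      fun hxy hne => hf.not_crosses_of_isEdge hxy hne
    exact (eq_of_crosses_diagonal_of_not_crosses_sides h0p hpb hbq huw
      (side h0p' (by rw [Ne, Sym2.eq_iff]; omega)) (side hpb' (by rw [Ne, Sym2.eq_iff]; omega))
      (side hbq' (by rw [Ne, Sym2.eq_iff]; omega))
      (side h0q' (by rw [Ne, Sym2.eq_iff]; omega))).2 hf.crosses

theorem existsUnique_isFlipPartner (hd : d ∈ T.diags) : ∃! f, T.IsFlipPartner d f := by
  obtain ⟨a, b, -, rfl⟩ := (T.isDiag d hd).exists_lt
  have h := existsUnique_isFlipPartner_of_zero_mem (T := T.rotate (-a)) (b := b + -a)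
    (by rw [← add_neg_cancel a]; exact segmentRotation_mem_rotate.2 hd)
  rw [← add_neg_cancel a, ← segmentRotation_mk] at h
  exact ((segmentRotation (-a)).existsUnique_congr fun f => isFlipPartner_rotate_iff.symm).2 h

def flip (T : Triangulation n) (hf : T.IsFlipPartner d f) : Triangulation n where
  diags := insert f (T.diags.erase d)
  isDiag e he := by
    rcases Finset.mem_insert.1 he with rfl | he
    · exact hf.1
    · exact T.isDiag e (Finset.mem_of_mem_erase he)
  noncross e he e' he' := by
    simp only [Finset.mem_insert, Finset.mem_erase] at he he'
    rcases he with rfl | ⟨hed, he⟩ <;> rcases he' with rfl | ⟨hed', he'⟩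
    · exact not_crosses_self _
    · exact hf.2.2 e' he' hed'
    · exact fun h => hf.2.2 e he hed h.symm
    · exact T.noncross e he e' he'
  maximal g hg h := by
    have hcompat : ∀ e ∈ T.diags, e ≠ d → ¬ Crosses n g e :=
      fun e he hed => h e (Finset.mem_insert_of_mem (Finset.mem_erase.2 ⟨hed, he⟩))
    by_cases hgd : Crosses n g d
    · have hgT : g ∉ T.diags := fun hgT => T.noncross g hgT d hf.mem hgd
      rw [(existsUnique_isFlipPartner hf.mem).unique ⟨hg, hgT, hcompat⟩ hf]
      exact Finset.mem_insert_self _ _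
    · refine Finset.mem_insert_of_mem (Finset.mem_erase.2 ⟨?_, ?_⟩)
      · rintro rfl
        exact h f (Finset.mem_insert_self _ _) hf.crosses.symm
      · exact T.maximal g hg fun e he => if hed : e = d then hed ▸ hgd else hcompat e he hed

theorem flip_diags (hf : T.IsFlipPartner d f) :
    (T.flip hf).diags = insert f (T.diags.erase d) :=
  rfl

theorem isFlip_flip (hf : T.IsFlipPartner d f) : IsFlip T d (T.flip hf) := by
  refine ⟨hf.mem, fun h => ?_, fun e he hed =>
    Finset.mem_insert_of_mem (Finset.mem_erase.2 ⟨hed, he⟩)⟩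
  rcases Finset.mem_insert.1 h with h | h
  · exact hf.2.1 (h ▸ hf.mem)
  · exact (Finset.mem_erase.1 h).1 rfl

theorem isFlip_flip_symm (hf : T.IsFlipPartner d f) : IsFlip (T.flip hf) f T :=
  ⟨Finset.mem_insert_self _ _, hf.2.1, fun _ he hef =>
    Finset.mem_of_mem_erase ((Finset.mem_insert.1 he).resolve_left hef)⟩

theorem flip_ne (hf : T.IsFlipPartner d f) : T.flip hf ≠ T := fun h =>
  (isFlip_flip hf).2.1 (by rw [h]; exact hf.mem)

theorem newDiag_flip (hf : T.IsFlipPartner d f) : NewDiag T (T.flip hf) f :=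
  ⟨Finset.mem_insert_self _ _, hf.2.1⟩

theorem _root_.IsFlip.exists_eq_flip (h : IsFlip T d T') :
    ∃ f, ∃ hf : T.IsFlipPartner d f, T' = T.flip hf := by
  obtain ⟨f, hf, huniq⟩ := existsUnique_isFlipPartner h.1
  refine ⟨f, hf, eq_of_subset fun e he => ?_⟩
  by_cases heT : e ∈ T.diags
  · exact Finset.mem_insert_of_mem (Finset.mem_erase.2 ⟨fun hed => h.2.1 (hed ▸ he), heT⟩)
  · rw [huniq e ⟨T'.isDiag e he, heT, fun e' he' hne => T'.noncross e he e' (h.2.2 e' he' hne)⟩]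
    exact Finset.mem_insert_self _ _

theorem _root_.FlipAdj.symm (h : FlipAdj T T') : FlipAdj T' T := by
  obtain ⟨d, h⟩ := h
  obtain ⟨f, hf, rfl⟩ := h.exists_eq_flip
  exact ⟨f, isFlip_flip_symm hf⟩

theorem exists_eq_flip_of_adj (h : (TriGraph n).Adj T T') :
    ∃ d f, ∃ hf : T.IsFlipPartner d f, T' = T.flip hf :=
  let ⟨d, hd⟩ := h.2.elim id FlipAdj.symm
  ⟨d, hd.exists_eq_flip⟩

theorem card_fan_le (hn : 3 ≤ n) (v : Fin n) : (fan v).diags.card ≤ n - 3 := by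
  classical
  have h1 : (1 : Fin n) ≠ 0 := by simp [Fin.ext_iff, Nat.mod_eq_of_lt (show 1 < n by omega)]
  have h2 : (1 + 1 : Fin n) ≠ 0 := by
    simp [Fin.ext_iff, Fin.val_add, Nat.mod_eq_of_lt (show 2 < n by omega)]
  have hcard : ({v, v + 1, v - 1} : Finset (Fin n)).card = 3 := by
    refine Finset.card_eq_three.2 ⟨v, v + 1, v - 1, by simpa using h1.symm,
      by simpa [sub_eq_add_neg] using h1.symm, ?_, rfl⟩
    rwa [Ne, eq_sub_iff_add_eq, add_assoc, add_eq_left]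
  calc (fan v).diags.card ≤ (Finset.univ.filter fun w => IsDiag n s(v, w)).card :=
        Finset.card_image_le
    _ ≤ (Finset.univ \ {v, v + 1, v - 1}).card := Finset.card_le_card fun w hw => by
        obtain ⟨h₁, h₂, h₃⟩ := isDiag_mk_iff_add_one.1 (Finset.mem_filter.1 hw).2
        simp only [Finset.mem_sdiff, Finset.mem_univ, Finset.mem_insert, Finset.mem_singleton,
          true_and, eq_sub_iff_add_eq]
        tauto
    _ = n - 3 := by rw [Finset.card_univ_sdiff, Fintype.card_fin, hcard]

theorem degree_le (hn : 3 ≤ n) (T : Triangulation n) (v : Fin n) : T.degree v ≤ n - 3 :=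
  (Finset.card_le_card fun e he => mem_fan.2 ⟨T.isDiag e (Finset.mem_filter.1 he).1,
    (Finset.mem_filter.1 he).2⟩).trans (card_fan_le hn v)

theorem degree_flip {e : Sym2 (Fin n)} {w : Fin n} (hf : T.IsFlipPartner e s(v, w))
    (hve : v ∉ e) : (T.flip hf).degree v = T.degree v + 1 := by
  have he : e ∉ T.diags.filter (v ∈ ·) := fun h => hve (Finset.mem_filter.1 h).2
  have hf' : s(v, w) ∉ T.diags.filter (v ∈ ·) := fun h => hf.2.1 (Finset.mem_filter.1 h).1
  rw [degree, degree, flip_diags, Finset.filter_insert, if_pos (Sym2.mem_mk_left v w),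
    Finset.filter_erase, Finset.erase_eq_of_notMem he, Finset.card_insert_of_notMem hf']

/-- The neighbours `x < j < y` of `0` in `T` closest to a missing diagonal `0j` span a diagonal
`xy` of `T`, and flipping it creates a diagonal through `0`. -/
theorem exists_isFlipPartner_zero_mk_of_not_mem {j : Fin n} (hj : IsDiag n s(0, j))
    (hjT : s(0, j) ∉ T.diags) : ∃ e w, T.IsFlipPartner e s(0, w) ∧ 0 ∉ e := by
  classical
  have h0 := Fin.val_zero n
  obtain ⟨h1j, hjn⟩ := isDiag_zero_mk_iff.1 hj
  obtain ⟨one, h1⟩ : ∃ w : Fin n, w.val = 1 := ⟨⟨1, by omega⟩, rfl⟩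
  obtain ⟨last, hlast⟩ : ∃ w : Fin n, w.val + 1 = n := ⟨⟨n - 1, by omega⟩, by simp; omega⟩
  obtain ⟨x, hx, hxmax⟩ := Finset.exists_max_image
    (Finset.univ.filter fun x => 0 < x ∧ x < j ∧ T.IsEdge 0 x) id
    ⟨one, Finset.mem_filter.2 ⟨Finset.mem_univ _, by omega, by omega,
      isEdge_of_val_add_one (by omega)⟩⟩
  obtain ⟨y, hy, hymin⟩ := Finset.exists_min_image
    (Finset.univ.filter fun y => j < y ∧ T.IsEdge 0 y) id
    ⟨last, Finset.mem_filter.2 ⟨Finset.mem_univ _, by omega, isEdge_of_val_eq_zero h0 hlast⟩⟩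
  simp only [Finset.mem_filter, Finset.mem_univ, true_and, id] at hx hxmax hy hymin
  obtain ⟨h0x, hxj, hx⟩ := hx
  obtain ⟨hjy, hy⟩ := hy
  have hgap : ∀ w, x < w → w < y → ¬ T.IsEdge 0 w := fun w hxw hwy hw => by
    rcases lt_trichotomy w j with hwj | rfl | hjw
    · exact (hxmax w ⟨by omega, hwj, hw⟩).not_gt hxw
    · exact hjT (hw hj)
    · exact (hymin w ⟨hjw, hw⟩).not_gt hwy
  have hxy : x < y := hxj.trans hjy
  have hxyT : s(x, y) ∈ T.diags := by
    refine mem_diags_of_forall ((isDiag_mk_iff_of_lt hxy).2 ⟨by omega, by omega⟩)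
      fun u w huw he hc => ?_
    rw [crosses_mk_iff_of_lt hxy huw] at hc
    rcases (Fin.zero_le u).eq_or_lt with rfl | hu
    · exact hgap w (by omega) (by omega) (isEdge_of_mem he)
    rcases hc with hc | hc
    · exact hy.not_crosses he ((crosses_mk_iff_of_lt huw (h0x.trans hxy)).2 (by omega))
    · exact hx.not_crosses he ((crosses_mk_iff_of_lt huw h0x).2 (by omega))
  obtain ⟨f, hf, -⟩ := existsUnique_isFlipPartner hxyT
  obtain ⟨u, w, huw, rfl⟩ := hf.1.exists_lt
  have hc := (crosses_mk_iff_of_lt huw hxy).1 hf.crosses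
  rcases (Fin.zero_le u).eq_or_lt with rfl | hu
  · exact ⟨s(x, y), w, hf, fun h => by rw [Sym2.mem_iff] at h; omega⟩
  rcases hc with hc | hc
  · exact absurd ((crosses_mk_iff_of_lt huw h0x).2 (by omega))
      (hf.not_crosses_of_isEdge hx (by rw [Ne, Sym2.eq_iff]; omega))
  · exact absurd ((crosses_mk_iff_of_lt huw (h0x.trans hxy)).2 (by omega))
      (hf.not_crosses_of_isEdge hy (by rw [Ne, Sym2.eq_iff]; omega))

theorem exists_isFlipPartner_mk_of_not_mem {j : Fin n} (hj : IsDiag n s(v, j))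
    (hjT : s(v, j) ∉ T.diags) :
    ∃ e w, T.IsFlipPartner e s(v, w) ∧ v ∉ e := by
  have hrot : ∀ z, s(0, z + -v) = segmentRotation (-v) s(v, z) := fun z => by simp
  obtain ⟨e, w, hf, h0e⟩ :=
    exists_isFlipPartner_zero_mk_of_not_mem (T := T.rotate (-v)) (j := j + -v)
    (by rwa [hrot, isDiag_segmentRotation_iff]) (by rwa [hrot, segmentRotation_mem_rotate])
  rw [← (segmentRotation (-v)).apply_symm_apply e] at hf h0e
  rw [← add_neg_cancel_right w v, hrot, isFlipPartner_rotate_iff] at hf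
  rw [← add_neg_cancel v, mem_segmentRotation_iff] at h0e
  exact ⟨_, _, hf, h0e⟩

theorem exists_isFlipPartner_of_ne_fan (h : T ≠ fan v) :
    ∃ e w, T.IsFlipPartner e s(v, w) ∧ v ∉ e := by
  obtain ⟨s, hs, hsT⟩ := Finset.not_subset.1 fun hsub => h (eq_of_subset hsub).symm
  obtain ⟨hs, hvs⟩ := mem_fan.1 hs
  obtain ⟨j, rfl⟩ := Sym2.mem_iff_exists.1 hvs
  exact exists_isFlipPartner_mk_of_not_mem hs hsT

end Triangulation

open Triangulation

variable {v : Fin n}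

theorem exists_dGraph_adj_flip_fst {A T₂ : Triangulation n} {d f : Sym2 (Fin n)}
    (h : Disjoint A.diags T₂.diags) (hf : A.IsFlipPartner d f) :
    ∃ T₂', ∃ h' : Disjoint (A.flip hf).diags T₂'.diags,
      (DGraph n).Adj ⟨(A, T₂), h⟩ ⟨(A.flip hf, T₂'), h'⟩ := by
  have hne : ∀ {T₂' h'}, (⟨(A, T₂), h⟩ : DVert n) ≠ ⟨(A.flip hf, T₂'), h'⟩ := fun heq =>
    flip_ne hf (congrArg (fun p : DVert n => p.1.1) heq).symm
  by_cases hfT : f ∈ T₂.diags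
  · obtain ⟨g, hg, -⟩ := existsUnique_isFlipPartner hfT
    refine ⟨T₂.flip hg, Finset.disjoint_left.2 fun e he he' => ?_, hne,
      Or.inl (Or.inl ⟨d, _, f, isFlip_flip hf, newDiag_flip hf,
        Or.inr ⟨hfT, _, isFlip_flip hg, rfl⟩⟩)⟩
    rw [flip_diags, Finset.mem_insert, Finset.mem_erase] at he'
    rcases he' with rfl | ⟨hef, he'⟩
    · exact (A.flip hf).noncross e he f (Finset.mem_insert_self _ _) hg.crosses
    · rcases Finset.mem_insert.1 he with rfl | he
      · exact hef rfl
      · exact Finset.disjoint_left.1 h (Finset.mem_of_mem_erase he) he'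
  · refine ⟨T₂, Finset.disjoint_left.2 fun e he he' => ?_, hne,
      Or.inl (Or.inl ⟨d, _, f, isFlip_flip hf, newDiag_flip hf, Or.inl ⟨hfT, rfl⟩⟩)⟩
    rcases Finset.mem_insert.1 he with rfl | he
    · exact hfT he'
    · exact Finset.disjoint_left.1 h (Finset.mem_of_mem_erase he) he'

theorem exists_dGraph_adj_flip_snd {S X : Triangulation n} {e f : Sym2 (Fin n)}
    (h : Disjoint S.diags X.diags) (hf : X.IsFlipPartner e f) (hfS : f ∉ S.diags) :
    ∃ h' : Disjoint S.diags (X.flip hf).diags,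
      (DGraph n).Adj ⟨(S, X), h⟩ ⟨(S, X.flip hf), h'⟩ := by
  refine ⟨Finset.disjoint_left.2 fun g hg hg' => ?_, fun heq => ?_,
    Or.inl (Or.inr ⟨e, _, f, isFlip_flip hf, newDiag_flip hf, Or.inl ⟨hfS, rfl⟩⟩)⟩
  · rcases Finset.mem_insert.1 hg' with rfl | hg'
    · exact hfS hg
    · exact Finset.disjoint_left.1 h hg (Finset.mem_of_mem_erase hg')
  · exact flip_ne hf (congrArg (fun p : DVert n => p.1.2) heq).symm

theorem exists_dGraph_walk_of_walk {T₁ S₁ : Triangulation n} (p : (TriGraph n).Walk T₁ S₁)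
    (T₂ : Triangulation n) (h : Disjoint T₁.diags T₂.diags) :
    ∃ X, ∃ hX : Disjoint S₁.diags X.diags,
      ∃ q : (DGraph n).Walk ⟨(T₁, T₂), h⟩ ⟨(S₁, X), hX⟩, q.length = p.length := by
  induction p generalizing T₂ with
  | nil => exact ⟨T₂, h, .nil, rfl⟩
  | cons hadj p ih =>
    obtain ⟨d, f, hf, rfl⟩ := exists_eq_flip_of_adj hadj
    obtain ⟨T₂', h', hadj'⟩ := exists_dGraph_adj_flip_fst h hf
    obtain ⟨X, hX, q, hq⟩ := ih T₂' h'
    exact ⟨X, hX, .cons hadj' q, congrArg (· + 1) hq⟩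

theorem exists_dGraph_walk_to_fan (hn : 3 ≤ n) {S : Triangulation n} (hv : ∀ e ∈ S.diags, v ∉ e)
    (X : Triangulation n) (hX : Disjoint S.diags X.diags) :
    ∃ q : (DGraph n).Walk ⟨(S, X), hX⟩ ⟨(S, fan v), disjoint_fan hv⟩,
      q.length ≤ n - 3 - X.degree v := by
  refine SimpleGraph.exists_walk_length_le_of_ascent (fun p : DVert n => p.1.1 = S)
    (fun p => p.1.2.degree v) (fun p _ => degree_le hn _ v) ?_ _ rfl
  rintro ⟨⟨S', Y⟩, hY⟩ rfl hne
  have hYv : Y ≠ fan v := by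
    rintro rfl
    exact hne rfl
  obtain ⟨e, w, hf, hve⟩ := exists_isFlipPartner_of_ne_fan hYv
  obtain ⟨h', hadj⟩ := exists_dGraph_adj_flip_snd hY hf fun hS => hv _ hS (Sym2.mem_mk_left v w)
  refine ⟨⟨(S', Y.flip hf), h'⟩, rfl, hadj, ?_⟩
  show Y.degree v < (Y.flip hf).degree v
  rw [degree_flip hf hve]
  exact Nat.lt_succ_self _

theorem triGraph_connected (hn : 3 ≤ n) : (TriGraph n).Connected := by
  have : Nonempty (Triangulation n) := ⟨fan 0⟩
  have reach : ∀ T, (TriGraph n).Reachable T (fan 0) := fun T =>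
    (SimpleGraph.exists_walk_length_le_of_ascent (fun _ => True) (·.degree 0)
      (fun T _ => degree_le hn T 0) (fun T _ hT => ?_) T trivial).elim fun p _ => ⟨p⟩
  · exact ⟨fun T T' => (reach T).trans (reach T').symm⟩
  obtain ⟨e, w, hf, hve⟩ := exists_isFlipPartner_of_ne_fan hT
  exact ⟨T.flip hf, trivial, ⟨(flip_ne hf).symm, Or.inl ⟨e, isFlip_flip hf⟩⟩,
    by simp [degree_flip hf hve]⟩

theorem exists_dGraph_walk_length_le (hn : 4 ≤ n) (p q : DVert n) :
    ∃ w : (DGraph n).Walk p q, w.length ≤ (TriGraph n).diam + (2 * n - 8) := by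
  obtain ⟨⟨T₁, T₂⟩, hp⟩ := p
  obtain ⟨⟨S₁, S₂⟩, hq⟩ := q
  have hT := triGraph_connected (n := n) (by omega)
  have : Finite (Triangulation n) := Finite.of_injective _ fun _ _ => Triangulation.ext
  have : Nonempty (Triangulation n) := hT.nonempty
  obtain ⟨w₀, hw₀⟩ := (hT.preconnected T₁ S₁).exists_walk_length_eq_dist
  have := SimpleGraph.dist_le_diam (SimpleGraph.connected_iff_ediam_ne_top.1 hT) (u := T₁) (v := S₁)
  obtain ⟨X, hX, w₁, hw₁⟩ := exists_dGraph_walk_of_walk w₀ T₂ hp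
  obtain ⟨v, hv, hdeg⟩ := exists_forall_not_mem_and_degree_pos hn S₁
  obtain ⟨w₂, hw₂⟩ := exists_dGraph_walk_to_fan (by omega) hv X hX
  obtain ⟨w₃, hw₃⟩ := exists_dGraph_walk_to_fan (by omega) hv S₂ hq
  have := hdeg X hX
  have := hdeg S₂ hq
  have := w₁.length_append (w₂.append w₃.reverse)
  have := w₂.length_append w₃.reverse
  have := w₃.length_reverse
  exact ⟨w₁.append (w₂.append w₃.reverse), by omega⟩

end

/-- For `n ≥ 5`, the flip graph `D_n` on ordered pairs of
disjoint triangulations of the convex `n`-gon is connected, its diameter is at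
most `diam(T_n) + (2n - 8)`, and in particular if `diam(T_n) ≤ 2n - 8` then
`diam(D_n) ≤ 4n - 16`. -/
theorem DGraph_connected_diam (n : ℕ) (hn : 5 ≤ n) :
    (DGraph n).Connected ∧
      (DGraph n).diam ≤ (TriGraph n).diam + (2 * n - 8) ∧
      ((TriGraph n).diam ≤ 2 * n - 8 → (DGraph n).diam ≤ 4 * n - 16) := by
  have : NeZero n := ⟨by omega⟩
  have hwalk := exists_dGraph_walk_length_le (n := n) (by omega)
  obtain ⟨v, hv, -⟩ :=
    Triangulation.exists_forall_not_mem_and_degree_pos (by omega) (Triangulation.fan (0 : Fin n))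
  have : Nonempty (DVert n) := ⟨⟨(_, _), Triangulation.disjoint_fan hv⟩⟩
  have hdiam := SimpleGraph.diam_le_of_forall_exists_walk hwalk
  exact ⟨⟨fun p q => (hwalk p q).elim fun w _ => ⟨w⟩⟩, hdiam, fun h => by omega⟩
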